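/- (Validity of I-elimination) For all finite multisets Γ, Δ of IMLL formulas and every IMLL formula χ: if Γ ⊩ χ and Δ ⊩ I, then Γ ⨾ Δ ⊩ χ. -/
import Mathlib


/-- Formulas of intuitionistic multiplicative linear logic over a
countably infinite set of atoms (here: `ℕ`). -/
inductive MForm : Type where
  | atom : ℕ → MForm
  | tensor : MForm → MForm → MForm
  | unit : MForm
  | limp : MForm → MForm → MForm
deriving DecidableEq

/-- An atomic rule `(P₁ ▷ p₁, …, Pₙ ▷ pₙ) ⇒ p`: a (possibly empty) finite
set of atomic sequents together with a conclusion atom. -/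
structure MRule : Type where
  prems : Finset (Multiset ℕ × ℕ)
  concl : ℕ

/-- A base is a set of atomic rules. -/
abbrev MBase := Set MRule

/-- Derivability in a base `B`: `P ⊢_B p`. -/
inductive MDer (B : MBase) : Multiset ℕ → ℕ → Prop where
  | ref (p : ℕ) : MDer B {p} p
  | app {r : MRule} (hr : r ∈ B) (S : Multiset ℕ × ℕ → Multiset ℕ)
      (h : ∀ pr ∈ r.prems, MDer B (S pr + pr.1) pr.2) :
      MDer B (r.prems.sum S) r.concl

/-- The resource-indexed support relation `⊩_B^P φ`. -/
def MSupp : MForm → MBase → Multiset ℕ → Prop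
  | .atom p, B, P => MDer B P p
  | .tensor φ ψ, B, P => ∀ X : MBase, B ⊆ X → ∀ U : Multiset ℕ, ∀ p : ℕ,
      (∀ Y : MBase, X ⊆ Y → ∀ V : Multiset ℕ,
        (∃ V₁ V₂ : Multiset ℕ, V = V₁ + V₂ ∧ MSupp φ Y V₁ ∧ MSupp ψ Y V₂) →
        MDer Y (U + V) p) →
      MDer X (P + U) p
  | .unit, B, P => ∀ X : MBase, B ⊆ X → ∀ U : Multiset ℕ, ∀ p : ℕ,
      MDer X U p → MDer X (P + U) p
  | .limp φ ψ, B, P => ∀ X : MBase, B ⊆ X → ∀ U : Multiset ℕ,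
      MSupp φ X U → MSupp ψ X (P + U)

/-- Support of a multiset of formulas: `⊩_B^P Γ`, obtained by splitting
the resources `P` among the members of `Γ`. -/
inductive MSuppCtx (B : MBase) : Multiset ℕ → Multiset MForm → Prop where
  | nil : MSuppCtx B 0 0
  | cons {P Q : Multiset ℕ} {φ : MForm} {Γ : Multiset MForm} :
      MSupp φ B P → MSuppCtx B Q Γ → MSuppCtx B (P + Q) (φ ::ₘ Γ)

/-- Support of a sequent: `Γ ⊩_B^P φ` (clause (Inf)). -/
def MSuppInf (Γ : Multiset MForm) (B : MBase) (P : Multiset ℕ) (φ : MForm) : Prop :=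
  ∀ X : MBase, B ⊆ X → ∀ U : Multiset ℕ, MSuppCtx X U Γ → MSupp φ X (P + U)

/-- Validity: `Γ ⊩ φ` iff `Γ ⊩_B^∅ φ` for every base `B`. -/
def MValid (Γ : Multiset MForm) (φ : MForm) : Prop :=
  ∀ B : MBase, MSuppInf Γ B 0 φ

/-- The natural deduction system NIMLL: `Γ ⊢ φ`. -/
inductive NIMLL : Multiset MForm → MForm → Prop where
  | ax (φ : MForm) : NIMLL {φ} φ
  | limpI {Γ : Multiset MForm} {φ ψ : MForm} :
      NIMLL (φ ::ₘ Γ) ψ → NIMLL Γ (.limp φ ψ)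
  | limpE {Γ Δ : Multiset MForm} {φ ψ : MForm} :
      NIMLL Γ (.limp φ ψ) → NIMLL Δ φ → NIMLL (Γ + Δ) ψ
  | unitI : NIMLL 0 .unit
  | unitE {Γ Δ : Multiset MForm} {φ : MForm} :
      NIMLL Γ φ → NIMLL Δ .unit → NIMLL (Γ + Δ) φ
  | tensorI {Γ Δ : Multiset MForm} {φ ψ : MForm} :
      NIMLL Γ φ → NIMLL Δ ψ → NIMLL (Γ + Δ) (.tensor φ ψ)
  | tensorE {Γ Δ : Multiset MForm} {φ ψ χ : MForm} :
      NIMLL Γ (.tensor φ ψ) → NIMLL (φ ::ₘ ψ ::ₘ Δ) χ → NIMLL (Γ + Δ) χ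

lemma msupp_cast {χ : MForm} {B : MBase} {P Q : Multiset ℕ} (h : P = Q)
    (hp : MSupp χ B P) : MSupp χ B Q := h ▸ hp

lemma msupp_unit_weaken : ∀ (χ : MForm) (B : MBase) (P Q : Multiset ℕ),
    MSupp χ B P → MSupp MForm.unit B Q → MSupp χ B (P + Q) := by
  intro χ
  induction χ with
  | atom p =>
    intro B P Q hP hQ
    have := hQ B (Set.Subset.refl B) P p hP
    exact msupp_cast (χ := .atom p) (add_comm Q P) this
  | tensor φ ψ ih1 ih2 =>
    intro B P Q hP hQ
    intro X hX U p hcl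
    have h1 := hP X hX U p hcl
    have h2 := hQ X hX (P + U) p h1
    have he : Q + (P + U) = P + Q + U := by
      rw [add_comm Q (P + U), add_assoc, add_comm U Q, ← add_assoc]
    exact he ▸ h2
  | unit =>
    intro B P Q hP hQ
    intro X hX U p h
    have h2 := hQ X hX (P + U) p (hP X hX U p h)
    have he : Q + (P + U) = P + Q + U := by
      rw [add_comm Q (P + U), add_assoc, add_comm U Q, ← add_assoc]
    exact he ▸ h2
  | limp φ ψ ih1 ih2 =>
    intro B P Q hP hQ
    intro X hX U hφ
    have h1 := hP X hX U hφ
    have hQ' : MSupp MForm.unit X Q := fun Y hY => hQ Y (hX.trans hY)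
    have h2 := ih2 X (P + U) Q h1 hQ'
    have he : P + U + Q = P + Q + U := by
      rw [add_assoc, add_comm U Q, ← add_assoc]
    exact msupp_cast he h2

lemma msuppctx_mem {B : MBase} {U : Multiset ℕ} {Θ : Multiset MForm} {φ : MForm}
    (h : MSuppCtx B U Θ) (hm : φ ∈ Θ) :
    ∃ P Q, U = P + Q ∧ MSupp φ B P ∧ MSuppCtx B Q (Θ.erase φ) := by
  induction h with
  | nil => simp at hm
  | @cons P' Q' φ' Γ' hφ' hΓ' ih =>
    by_cases heq : φ' = φ
    · subst heq
      exact ⟨P', Q', rfl, hφ', by simpa using hΓ'⟩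
    · have hm' : φ ∈ Γ' := by
        rcases Multiset.mem_cons.mp hm with h | h
        · exact absurd h.symm heq
        · exact h
      obtain ⟨P, Q, hU, hP, hQ⟩ := ih hm'
      refine ⟨P, P' + Q, ?_, hP, ?_⟩
      · rw [hU, add_left_comm]
      · rw [Multiset.erase_cons_tail _ (by simp [heq])]
        exact MSuppCtx.cons hφ' hQ

lemma msuppctx_split {B : MBase} {U : Multiset ℕ} (Γ Δ : Multiset MForm)
    (h : MSuppCtx B U (Γ + Δ)) :
    ∃ P Q, U = P + Q ∧ MSuppCtx B P Γ ∧ MSuppCtx B Q Δ := by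
  induction Γ using Multiset.induction generalizing U with
  | empty => exact ⟨0, U, by simp, MSuppCtx.nil, by simpa using h⟩
  | cons φ Γ ih =>
    have hm : φ ∈ (φ ::ₘ Γ) + Δ := by simp
    obtain ⟨P, Q, hU, hP, hQ⟩ := msuppctx_mem h hm
    have he : ((φ ::ₘ Γ) + Δ).erase φ = Γ + Δ := by
      rw [Multiset.cons_add, Multiset.erase_cons_head]
    rw [he] at hQ
    obtain ⟨Q₁, Q₂, hQeq, h1, h2⟩ := ih hQ
    exact ⟨P + Q₁, Q₂, by rw [hU, hQeq, add_assoc], MSuppCtx.cons hP h1, h2⟩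

/-- (Validity of I-elimination) If `Γ ⊩ χ` and `Δ ⊩ I`, then `Γ ⨾ Δ ⊩ χ`. -/
theorem imll_unit_elim_valid (Γ Δ : Multiset MForm) (χ : MForm)
    (h1 : MValid Γ χ) (h2 : MValid Δ .unit) :
    MValid (Γ + Δ) χ := by
  intro B X hBX U hU
  obtain ⟨U₁, U₂, hUeq, hΓ, hΔ⟩ := msuppctx_split Γ Δ hU
  have hχ := h1 B X hBX U₁ hΓ
  have hI := h2 B X hBX U₂ hΔ
  have := msupp_unit_weaken χ X (0 + U₁) (0 + U₂) hχ hI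
  exact msupp_cast (by simp [hUeq]) this
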